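/- (Global Sobolev–Poincaré inequality implies lower mass bound on uniformly perfect spaces.) Let (X,d,μ) be a uniformly perfect metric-measure space, 0 < p < s, p* = sp/(s−p). Suppose there is C_P > 0 such that inf_{γ∈ℝ}(∫_X |u−γ|^{p*}dμ)^{1/p*} ≤ C_P (∫_X g^p dμ)^{1/p} whenever u ∈ M^{1,p}(X,d,μ) and g ∈ D(u). Then there exists κ ∈ (0,∞) with μ(B(x,r)) ≥ κ r^s for every x ∈ X and every finite r ∈ (0, diam(X)]. -/

import Mathlib

open Metric MeasureTheory Set

/-- `g` is a Hajłasz gradient of `u` on `Ω`. -/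
def HajlaszGrad {X : Type*} [MetricSpace X] [MeasurableSpace X]
    (μ : Measure X) (Ω : Set X) (u g : X → ℝ) : Prop :=
  (∀ z, 0 ≤ g z) ∧ ∃ N : Set X, μ N = 0 ∧
    ∀ z ∈ Ω \ N, ∀ w ∈ Ω \ N, |u z - u w| ≤ dist z w * (g z + g w)

/-- `f ∈ L^p(Ω, μ)`. -/
def MemLpOn {X : Type*} [MetricSpace X] [MeasurableSpace X]
    (μ : Measure X) (Ω : Set X) (f : X → ℝ) (p : ℝ) : Prop :=
  ∫⁻ z in Ω, ENNReal.ofReal (|f z| ^ p) ∂μ < ⊤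

/-- The clamp function `t ↦ max 0 (min 1 t)` is `1`-Lipschitz. -/
lemma clamp_abs_sub_le (a b : ℝ) : |max 0 (min 1 a) - max 0 (min 1 b)| ≤ |a - b| := by
  have key : ∀ c d : ℝ, c ≤ d → |max 0 (min 1 c) - max 0 (min 1 d)| ≤ |c - d| := by
    intro c d h
    have h1 : min 1 c ≤ min 1 d := min_le_min le_rfl h
    have h2 : max 0 (min 1 c) ≤ max 0 (min 1 d) := max_le_max le_rfl h1
    rw [abs_sub_comm, abs_of_nonneg (by linarith), abs_sub_comm,
        abs_of_nonneg (by linarith : (0:ℝ) ≤ d - c)]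
    rcases le_total 1 c with h3 | h3 <;> rcases le_total 1 d with h4 | h4 <;>
      rcases le_total c 0 with h5 | h5 <;> rcases le_total d 0 with h6 | h6 <;>
      simp [min_eq_left, min_eq_right, max_eq_left, max_eq_right, h3, h4, h5, h6] <;>
      linarith
  rcases le_total a b with h | h
  · exact key a b h
  · rw [abs_sub_comm, abs_sub_comm a b]; exact key b a h

/-- `(a^n)^b = (a^b)^n` for nonnegative real base. -/
lemma pow_rpow_comm {a : ℝ} (ha : 0 ≤ a) (n : ℕ) (b : ℝ) :
    (a ^ n) ^ b = (a ^ b) ^ n := by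
  rw [← Real.rpow_natCast a n, ← Real.rpow_mul ha, mul_comm, Real.rpow_mul ha,
    Real.rpow_natCast]

/-- Iteration lemma: if a positive sequence bounded below by `δ > 0` satisfies
`V (j+1) ≤ Bc * σ^j * (V j)^(1+e)` then `V 0` admits an explicit lower bound. -/
lemma iterlem {Bc σ e δ : ℝ} (hB : 0 < Bc) (hσ : 1 ≤ σ) (he : 0 < e) (hδ : 0 < δ)
    (V : ℕ → ℝ) (hVδ : ∀ j, δ ≤ V j)
    (hit : ∀ j, V (j + 1) ≤ Bc * σ ^ j * V j ^ (1 + e)) :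
    (σ ^ (1 / e) * Bc) ^ (-(1 / e)) / 2 ≤ V 0 := by
  have hσp : (0:ℝ) < σ := lt_of_lt_of_le one_pos hσ
  have hτp : (0:ℝ) < σ ^ (1/e) := Real.rpow_pos_of_pos hσp _
  have hτ1 : (1:ℝ) ≤ σ ^ (1/e) := Real.one_le_rpow hσ (by positivity)
  set τ : ℝ := σ ^ (1/e) with hτ_def
  set K : ℝ := (τ * Bc) ^ (1/e) with hK_def
  have hKpos : 0 < K := Real.rpow_pos_of_pos (by positivity) _
  have hVpos : ∀ j, 0 < V j := fun j => lt_of_lt_of_le hδ (hVδ j)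
  by_contra hcon
  push_neg at hcon
  have hneg : (τ * Bc) ^ (-(1/e)) = K⁻¹ := by
    rw [hK_def, ← Real.rpow_neg (by positivity)]
  have hV0 : K * V 0 < 1/2 := by
    have h1 : V 0 < K⁻¹ / 2 := by rw [← hneg]; exact hcon
    calc K * V 0 < K * (K⁻¹ / 2) := by
          exact mul_lt_mul_of_pos_left h1 hKpos
      _ = 1/2 := by field_simp
  set w : ℕ → ℝ := fun j => K * τ ^ j * V j with hw_def
  have hwpos : ∀ j, 0 < w j := fun j => by
    have := hVpos j; simp only [hw_def]; positivity
  have hKe : K ^ e = τ * Bc := by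
    rw [hK_def, ← Real.rpow_mul (by positivity), one_div_mul_cancel he.ne',
      Real.rpow_one]
  have hτje : ∀ j : ℕ, (τ ^ j) ^ e = σ ^ j := by
    intro j
    rw [← Real.rpow_natCast τ j, hτ_def, ← Real.rpow_mul hσp.le,
      ← Real.rpow_mul hσp.le]
    rw [show 1/e * (j:ℝ) * e = (j:ℝ) by field_simp, Real.rpow_natCast]
  have hstep : ∀ j, w (j+1) ≤ w j ^ (1+e) := by
    intro j
    have hVj := hVpos j
    have h2 : w j ^ (1+e) = (K * τ ^ j) ^ (1+e) * V j ^ (1+e) := by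
      rw [hw_def]; exact Real.mul_rpow (by positivity) (by positivity)
    have h3 : (K * τ ^ j) ^ (1+e) = K * τ ^ (j+1) * Bc * σ ^ j := by
      rw [Real.rpow_add (by positivity), Real.rpow_one, Real.mul_rpow hKpos.le (by positivity),
        hKe, hτje j, pow_succ]
      ring
    calc w (j+1) = K * τ ^ (j+1) * V (j+1) := rfl
      _ ≤ K * τ ^ (j+1) * (Bc * σ ^ j * V j ^ (1+e)) := by
          exact mul_le_mul_of_nonneg_left (hit j) (by positivity)
      _ = (K * τ ^ (j+1) * Bc * σ ^ j) * V j ^ (1+e) := by ring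
      _ = w j ^ (1+e) := by rw [h2, h3]
  have hhalf : ∀ j, w j ≤ 1/2 * ((1/2:ℝ) ^ e) ^ j := by
    intro j
    induction j with
    | zero => simpa [hw_def] using hV0.le
    | succ n ih =>
      have hle1 : ((1/2:ℝ) ^ e) ^ n ≤ 1 := by
        apply pow_le_one₀ (by positivity)
        exact Real.rpow_le_one (by norm_num) (by norm_num) he.le
      have hwn : w n ≤ 1/2 := le_trans ih (by nlinarith)
      calc w (n+1) ≤ w n ^ (1+e) := hstep n
        _ = w n * w n ^ e := by
            rw [Real.rpow_add (hwpos n), Real.rpow_one]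
        _ ≤ (1/2 * ((1/2:ℝ) ^ e) ^ n) * (1/2:ℝ) ^ e := by
            exact mul_le_mul ih
              (Real.rpow_le_rpow (hwpos n).le hwn he.le)
              (Real.rpow_nonneg (hwpos n).le e) (by positivity)
        _ = 1/2 * ((1/2:ℝ) ^ e) ^ (n+1) := by ring
  have hlow : ∀ j : ℕ, K * δ ≤ 1/2 * ((1/2:ℝ) ^ e) ^ j := by
    intro j
    refine le_trans ?_ (hhalf j)
    have h1 : (1:ℝ) ≤ τ ^ j := one_le_pow₀ hτ1
    calc K * δ = K * 1 * δ := by ring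
      _ ≤ K * τ ^ j * V j := by
          apply mul_le_mul (mul_le_mul le_rfl h1 one_pos.le hKpos.le) (hVδ j) hδ.le
          positivity
      _ = w j := rfl
  obtain ⟨n, hn⟩ := exists_pow_lt_of_lt_one (show (0:ℝ) < K * δ by positivity)
    (Real.rpow_lt_one (by norm_num) (by norm_num) he : (1/2:ℝ) ^ e < 1)
  have h1 := hlow n
  have h2 : (0:ℝ) ≤ ((1/2:ℝ) ^ e) ^ n := by positivity
  linarith

theorem stmt17 {X : Type*} [MetricSpace X] [MeasurableSpace X] [BorelSpace X]
    (μ : Measure X)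
    (hμ : ∀ (x : X) (r : ℝ), 0 < r → 0 < μ (ball x r) ∧ μ (ball x r) < ⊤)
    {lam : ℝ} (hlam0 : 0 < lam) (hlam : lam < 1)
    (hup : ∀ (x : X) (r : ℝ), 0 < r → ball x r ≠ univ →
      (ball x r \ ball x (lam * r)).Nonempty)
    {s p C_P : ℝ} (hp : 0 < p) (hps : p < s) (hC : 0 < C_P)
    (hPoinc : ∀ u g : X → ℝ, HajlaszGrad μ univ u g →
      MemLpOn μ univ u p → MemLpOn μ univ g p →
      (⨅ c : ℝ, (∫⁻ z, ENNReal.ofReal (|u z - c| ^ (s * p / (s - p))) ∂μ) ^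
          ((s - p) / (s * p))) ≤
        ENNReal.ofReal C_P * (∫⁻ z, ENNReal.ofReal (g z ^ p) ∂μ) ^ (1 / p)) :
    ∃ κ : ℝ, 0 < κ ∧ ∀ (x : X) (r : ℝ), 0 < r →
      ENNReal.ofReal r ≤ EMetric.diam (univ : Set X) →
      ENNReal.ofReal (κ * r ^ s) ≤ μ (ball x r) := by
  have hs : 0 < s := hp.trans hps
  have hsp : 0 < s - p := sub_pos.2 hps
  set q : ℝ := s * p / (s - p) with hq_def
  have hq : 0 < q := by positivity
  set e : ℝ := p / (s - p) with he_def
  have he : 0 < e := by positivity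
  have hqp : q / p = 1 + e := by
    rw [hq_def, he_def]; field_simp; ring
  have hqe : q = s * e := by rw [hq_def, he_def, mul_div_assoc]
  have hinvq : (s - p) / (s * p) * q = 1 := by
    rw [hq_def]; field_simp
  have hp1e : p * (1 + e) = q := by
    rw [← hqp]; field_simp
  -- The engine: an iteration over shrinking annular cutoffs at a fixed ball.
  obtain ⟨c3, hc3, hengine⟩ : ∃ c3 : ℝ, 0 < c3 ∧ ∀ (y : X) (ρ : ℝ), 0 < ρ →
      μ (ball y (2*ρ)) ≤ 2 * μ (univ \ ball y (2*ρ)) →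
      ENNReal.ofReal (c3 * ρ ^ s) ≤ μ (ball y (2*ρ)) := by
    refine ⟨((2:ℝ) ^ (q/e) * ((2:ℝ) ^ (2*q+1) * C_P ^ q)) ^ (-(1/e)) / 2, by positivity, ?_⟩
    intro y ρ hρ hF
    set R : ℕ → ℝ := fun j => (1 + (1/2:ℝ) ^ j) * ρ with hR_def
    have hhalfpow : ∀ j : ℕ, (0:ℝ) < (1/2:ℝ) ^ j := fun j => by positivity
    have hRpos : ∀ j, 0 < R j := fun j => by
      have := hhalfpow j; simp only [hR_def]; positivity
    have hRle : ∀ j, R j ≤ 2 * ρ := by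
      intro j
      have h1 : ((1:ℝ)/2) ^ j ≤ 1 := pow_le_one₀ (by norm_num) (by norm_num)
      simp only [hR_def]; nlinarith
    have hRgt : ∀ j, ρ < R j := by
      intro j
      have := hhalfpow j
      simp only [hR_def]; nlinarith
    have hgap : ∀ j : ℕ, R j - R (j+1) = (1/2:ℝ) ^ (j+1) * ρ := by
      intro j; simp only [hR_def]; rw [pow_succ]; ring
    have hfin : ∀ t : ℝ, 0 < t → μ (ball y t) ≠ ⊤ := fun t ht => (hμ y t ht).2.ne
    -- The key one-scale inequality.
    have key : ∀ j : ℕ, (μ (ball y (R (j+1)))).toReal ≤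
        ((2:ℝ) ^ (2*q+1) * C_P ^ q * ρ ^ (-q)) * ((2:ℝ) ^ q) ^ j *
          ((μ (ball y (R j))).toReal) ^ (1 + e) := by
      intro j
      set L : ℝ := ((1/2:ℝ) ^ (j+1) * ρ)⁻¹ with hL_def
      have hL : 0 < L := by have := hhalfpow (j+1); simp only [hL_def]; positivity
      set T : Set X := ball y (R j) with hT_def
      set S : Set X := ball y (R (j+1)) with hS_def
      have hTmeas : MeasurableSet T := measurableSet_ball
      have hSmeas : MeasurableSet S := measurableSet_ball
      have hTfin : μ T ≠ ⊤ := hfin _ (hRpos j)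
      have hSfin : μ S ≠ ⊤ := hfin _ (hRpos (j+1))
      set u : X → ℝ := fun z => max 0 (min 1 (L * (R j - dist z y))) with hu_def
      set g : X → ℝ := fun z => T.indicator (fun _ => L) z with hg_def
      have hu0 : ∀ z, 0 ≤ u z := fun z => le_max_left _ _
      have hu1 : ∀ z, u z ≤ 1 := fun z => max_le (by norm_num) (min_le_left _ _)
      have huS : ∀ z ∈ S, u z = 1 := by
        intro z hz
        have hdz : dist z y < R (j+1) := mem_ball.1 hz
        have h1 : 1 ≤ L * (R j - dist z y) := by
          have h2 : R j - R (j+1) ≤ R j - dist z y := by linarith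
          have h3 : L * (R j - R (j+1)) = 1 := by
            rw [hgap j, hL_def]
            field_simp
          rw [← h3]
          exact mul_le_mul_of_nonneg_left h2 hL.le
        simp only [hu_def, min_eq_left h1]
        exact max_eq_right (by norm_num)
      have huT : ∀ z, z ∉ T → u z = 0 := by
        intro z hz
        have hdz : R j ≤ dist z y := by
          simpa [hT_def, mem_ball, not_lt] using hz
        have ht : L * (R j - dist z y) ≤ 0 :=
          mul_nonpos_of_nonneg_of_nonpos hL.le (by linarith)
        simp only [hu_def]
        exact max_eq_left (le_trans (min_le_right _ _) ht)
      have hgz : ∀ z, 0 ≤ g z := fun z => Set.indicator_nonneg (fun _ _ => hL.le) z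
      -- Hajlasz gradient property
      have hHG : HajlaszGrad μ univ u g := by
        refine ⟨hgz, ∅, measure_empty, ?_⟩
        intro z _ w _
        by_cases hzT : z ∈ T
        case neg =>
          by_cases hwT : w ∈ T
          case neg =>
            rw [huT z hzT, huT w hwT]
            simp only [sub_self, abs_zero]
            exact mul_nonneg dist_nonneg (add_nonneg (hgz z) (hgz w))
          case pos =>
            have hgL : L ≤ g z + g w := by
              have h1 : g w = L := Set.indicator_of_mem hwT _
              have h2 : 0 ≤ g z := hgz z
              linarith
            calc |u z - u w| ≤ |L * (R j - dist z y) - L * (R j - dist w y)| :=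
                  clamp_abs_sub_le _ _
              _ = L * |dist w y - dist z y| := by
                  rw [← mul_sub, abs_mul, abs_of_pos hL]; ring_nf
              _ ≤ L * dist z w := by
                  apply mul_le_mul_of_nonneg_left _ hL.le
                  rw [show dist z w = dist w z from dist_comm z w]
                  exact abs_dist_sub_le w z y
              _ ≤ dist z w * (g z + g w) := by
                  rw [mul_comm]
                  exact mul_le_mul_of_nonneg_left hgL dist_nonneg
        case pos =>
          have hgL : L ≤ g z + g w := by
            have h1 : g z = L := Set.indicator_of_mem hzT _
            have h2 : 0 ≤ g w := hgz w
            linarith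
          calc |u z - u w| ≤ |L * (R j - dist z y) - L * (R j - dist w y)| :=
                clamp_abs_sub_le _ _
            _ = L * |dist w y - dist z y| := by
                rw [← mul_sub, abs_mul, abs_of_pos hL]; ring_nf
            _ ≤ L * dist z w := by
                apply mul_le_mul_of_nonneg_left _ hL.le
                rw [show dist z w = dist w z from dist_comm z w]
                exact abs_dist_sub_le w z y
            _ ≤ dist z w * (g z + g w) := by
                rw [mul_comm]
                exact mul_le_mul_of_nonneg_left hgL dist_nonneg
      -- L^p membership of u
      have huLp : MemLpOn μ univ u p := by
        unfold MemLpOn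
        rw [Measure.restrict_univ]
        calc ∫⁻ z, ENNReal.ofReal (|u z| ^ p) ∂μ
            ≤ ∫⁻ z, T.indicator (fun _ => (1:ENNReal)) z ∂μ := by
              apply lintegral_mono
              intro z
              by_cases hzT : z ∈ T
              · simp only [Set.indicator_of_mem hzT]
                rw [ENNReal.ofReal_le_one]
                exact Real.rpow_le_one (abs_nonneg _) (by rw [abs_of_nonneg (hu0 z)]; exact hu1 z) hp.le
              · simp only [Set.indicator_of_notMem hzT, huT z hzT, abs_zero,
                  Real.zero_rpow hp.ne', ENNReal.ofReal_zero, le_refl]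
          _ = μ T := by rw [lintegral_indicator hTmeas, setLIntegral_const, one_mul]
          _ < ⊤ := hTfin.lt_top
      -- L^p membership of g
      have hgLp : MemLpOn μ univ g p := by
        unfold MemLpOn
        rw [Measure.restrict_univ]
        have heq : ∀ z, ENNReal.ofReal (|g z| ^ p) =
            T.indicator (fun _ => ENNReal.ofReal (L ^ p)) z := by
          intro z
          by_cases hzT : z ∈ T
          · simp only [hg_def, Set.indicator_of_mem hzT, abs_of_pos hL]
          · simp only [hg_def, Set.indicator_of_notMem hzT, abs_zero,
              Real.zero_rpow hp.ne', ENNReal.ofReal_zero]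
        rw [lintegral_congr heq, lintegral_indicator hTmeas, setLIntegral_const]
        exact ENNReal.mul_lt_top ENNReal.ofReal_lt_top hTfin.lt_top
      -- the gradient integral
      have hg_int : ∫⁻ z, ENNReal.ofReal (g z ^ p) ∂μ = ENNReal.ofReal (L ^ p) * μ T := by
        have heq : ∀ z, ENNReal.ofReal (g z ^ p) =
            T.indicator (fun _ => ENNReal.ofReal (L ^ p)) z := by
          intro z
          by_cases hzT : z ∈ T
          · simp only [hg_def, Set.indicator_of_mem hzT]
          · simp only [hg_def, Set.indicator_of_notMem hzT,
              Real.zero_rpow hp.ne', ENNReal.ofReal_zero]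
        rw [lintegral_congr heq, lintegral_indicator hTmeas, setLIntegral_const]
      -- lower bound for the oscillation integral
      have hlow : ∀ c : ℝ, ENNReal.ofReal ((1/2:ℝ) ^ q) * (2⁻¹ * μ S) ≤
          ∫⁻ z, ENNReal.ofReal (|u z - c| ^ q) ∂μ := by
        intro c
        by_cases hc : c ≤ 1/2
        · calc ENNReal.ofReal ((1/2:ℝ) ^ q) * (2⁻¹ * μ S)
              ≤ ENNReal.ofReal ((1/2:ℝ) ^ q) * μ S := by
                apply mul_le_mul_right
                calc 2⁻¹ * μ S ≤ 1 * μ S :=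
                      mul_le_mul_left (ENNReal.inv_le_one.mpr one_le_two) _
                  _ = μ S := one_mul _
            _ = ∫⁻ z, S.indicator (fun _ => ENNReal.ofReal ((1/2:ℝ) ^ q)) z ∂μ := by
                rw [lintegral_indicator hSmeas, setLIntegral_const, mul_comm]
            _ ≤ ∫⁻ z, ENNReal.ofReal (|u z - c| ^ q) ∂μ := by
                apply lintegral_mono
                intro z
                by_cases hzS : z ∈ S
                · simp only [Set.indicator_of_mem hzS]
                  apply ENNReal.ofReal_le_ofReal
                  apply Real.rpow_le_rpow (by norm_num) _ hq.le
                  rw [huS z hzS, abs_of_nonneg (by linarith : (0:ℝ) ≤ 1 - c)]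
                  linarith
                · simp only [Set.indicator_of_notMem hzS, zero_le]
        · push_neg at hc
          set D : Set X := univ \ T with hD_def
          have hDmeas : MeasurableSet D := MeasurableSet.univ.diff hTmeas
          have hSD : 2⁻¹ * μ S ≤ μ D := by
            have h1 : μ S ≤ 2 * μ D := by
              calc μ S ≤ μ (ball y (2*ρ)) :=
                    measure_mono (ball_subset_ball (hRle (j+1)))
                _ ≤ 2 * μ (univ \ ball y (2*ρ)) := hF
                _ ≤ 2 * μ D := by
                    apply mul_le_mul_right
                    apply measure_mono
                    apply diff_subset_diff_right
                    exact ball_subset_ball (hRle j)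
            calc 2⁻¹ * μ S ≤ 2⁻¹ * (2 * μ D) := mul_le_mul_right h1 _
              _ = μ D := by
                  rw [← mul_assoc, ENNReal.inv_mul_cancel two_ne_zero ENNReal.ofNat_ne_top,
                    one_mul]
          calc ENNReal.ofReal ((1/2:ℝ) ^ q) * (2⁻¹ * μ S)
              ≤ ENNReal.ofReal ((1/2:ℝ) ^ q) * μ D := mul_le_mul_right hSD _
            _ = ∫⁻ z, D.indicator (fun _ => ENNReal.ofReal ((1/2:ℝ) ^ q)) z ∂μ := by
                rw [lintegral_indicator hDmeas, setLIntegral_const, mul_comm]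
            _ ≤ ∫⁻ z, ENNReal.ofReal (|u z - c| ^ q) ∂μ := by
                apply lintegral_mono
                intro z
                by_cases hzD : z ∈ D
                · simp only [Set.indicator_of_mem hzD]
                  apply ENNReal.ofReal_le_ofReal
                  apply Real.rpow_le_rpow (by norm_num) _ hq.le
                  rw [huT z hzD.2, zero_sub, abs_neg, abs_of_pos (by linarith : (0:ℝ) < c)]
                  linarith
                · simp only [Set.indicator_of_notMem hzD, zero_le]
      -- apply the Poincaré hypothesis
      have hP := hPoinc u g hHG huLp hgLp
      have hLB : (ENNReal.ofReal ((1/2:ℝ) ^ q) * (2⁻¹ * μ S)) ^ ((s-p)/(s*p)) ≤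
          ENNReal.ofReal C_P * (ENNReal.ofReal (L ^ p) * μ T) ^ (1/p) := by
        rw [← hg_int]
        refine le_trans (le_trans ?_ hP) le_rfl
        exact le_iInf fun c => ENNReal.rpow_le_rpow (hlow c)
          (div_nonneg hsp.le (by positivity))
      have hq' := ENNReal.rpow_le_rpow hLB hq.le
      rw [← ENNReal.rpow_mul, hinvq, ENNReal.rpow_one,
        ENNReal.mul_rpow_of_nonneg _ _ hq.le, ← ENNReal.rpow_mul,
        show 1/p * q = 1 + e by rw [← hqp]; ring,
        ENNReal.mul_rpow_of_nonneg _ _ (by positivity : (0:ℝ) ≤ 1 + e)] at hq'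
      -- pass to real numbers
      have hRHSne : (ENNReal.ofReal C_P) ^ q *
          ((ENNReal.ofReal (L ^ p)) ^ (1+e) * (μ T) ^ (1+e)) ≠ ⊤ := by
        apply ENNReal.mul_ne_top
        · exact ENNReal.rpow_ne_top_of_nonneg hq.le ENNReal.ofReal_ne_top
        · exact ENNReal.mul_ne_top
            (ENNReal.rpow_ne_top_of_nonneg (by positivity) ENNReal.ofReal_ne_top)
            (ENNReal.rpow_ne_top_of_nonneg (by positivity) hTfin)
      have hreal := ENNReal.toReal_mono hRHSne hq'
      rw [ENNReal.toReal_mul, ENNReal.toReal_mul, ENNReal.toReal_mul, ENNReal.toReal_mul,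
        ENNReal.toReal_ofReal (by positivity), ENNReal.toReal_inv,
        ← ENNReal.toReal_rpow, ← ENNReal.toReal_rpow, ← ENNReal.toReal_rpow,
        ENNReal.toReal_ofReal hC.le, ENNReal.toReal_ofReal (by positivity)] at hreal
      simp only [ENNReal.toReal_ofNat] at hreal
      -- hreal : (1/2)^q * (2⁻¹ * (μ S).toReal) ≤ C_P^q * ((L^p)^(1+e) * (μ T).toReal^(1+e))
      set VS : ℝ := (μ S).toReal with hVS_def
      set VT : ℝ := (μ T).toReal with hVT_def
      have hVT0 : 0 ≤ VT := ENNReal.toReal_nonneg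
      -- identities to rearrange the constant
      have hLpe : (L ^ p) ^ (1 + e) = (2:ℝ)^q * ((2:ℝ)^q) ^ j * ρ ^ (-q) := by
        rw [← Real.rpow_mul hL.le, hp1e, hL_def,
          Real.inv_rpow (by positivity), Real.mul_rpow (by positivity) hρ.le,
          pow_rpow_comm (by norm_num : (0:ℝ) ≤ 1/2) (j+1) q]
        rw [show ((1:ℝ)/2) ^ q = ((2:ℝ)^q)⁻¹ by
          rw [one_div, Real.inv_rpow (by norm_num)]]
        rw [inv_pow, mul_inv, inv_inv, ← Real.rpow_neg hρ.le, pow_succ]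
        ring
      have hhalfq : ((1/2:ℝ) ^ q)⁻¹ = (2:ℝ)^q := by
        rw [one_div, Real.inv_rpow (by norm_num), inv_inv]
      have h2q1 : (2:ℝ) ^ (2*q+1) = (2:ℝ)^q * 2 * (2:ℝ)^q := by
        rw [Real.rpow_add two_pos, Real.rpow_one, two_mul, Real.rpow_add two_pos]
        ring
      have hhq : (0:ℝ) < (1/2:ℝ)^q := by positivity
      have hstep1 : ((1/2:ℝ)^q * 2⁻¹) * VS ≤
          C_P ^ q * ((L ^ p) ^ (1+e) * VT ^ (1+e)) := by
        calc ((1/2:ℝ)^q * 2⁻¹) * VS = (1/2:ℝ)^q * (2⁻¹ * VS) := by ring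
          _ ≤ _ := hreal
      have hstep2 : VS ≤ ((1/2:ℝ)^q * 2⁻¹)⁻¹ *
          (C_P ^ q * ((L ^ p) ^ (1+e) * VT ^ (1+e))) := by
        rw [le_inv_mul_iff₀ (by positivity)]
        exact hstep1
      refine le_trans hstep2 (le_of_eq ?_)
      rw [hLpe, mul_inv, hhalfq, inv_inv, h2q1]
      ring
    -- run the iteration
    set V : ℕ → ℝ := fun j => (μ (ball y (R j))).toReal with hV_def
    have hδpos : 0 < (μ (ball y ρ)).toReal :=
      ENNReal.toReal_pos (hμ y ρ hρ).1.ne' (hfin ρ hρ)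
    have hVδ : ∀ j, (μ (ball y ρ)).toReal ≤ V j := fun j =>
      ENNReal.toReal_mono (hfin _ (hRpos j)) (measure_mono (ball_subset_ball (hRgt j).le))
    have hσ1 : (1:ℝ) ≤ (2:ℝ)^q := Real.one_le_rpow one_le_two hq.le
    have hBpos : (0:ℝ) < (2:ℝ) ^ (2*q+1) * C_P ^ q * ρ ^ (-q) := by positivity
    have hiter := iterlem hBpos hσ1 he hδpos V hVδ key
    -- identify the constant
    have hR0 : R 0 = 2 * ρ := by simp only [hR_def]; norm_num
    have hconst : (((2:ℝ)^q) ^ (1/e) * ((2:ℝ) ^ (2*q+1) * C_P ^ q * ρ ^ (-q))) ^ (-(1/e)) / 2 =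
        ((2:ℝ) ^ (q/e) * ((2:ℝ) ^ (2*q+1) * C_P ^ q)) ^ (-(1/e)) / 2 * ρ ^ s := by
      have h1 : ((2:ℝ)^q) ^ (1/e) = (2:ℝ) ^ (q/e) := by
        rw [← Real.rpow_mul (by norm_num), mul_one_div]
      have h2 : ((2:ℝ)^q) ^ (1/e) * ((2:ℝ) ^ (2*q+1) * C_P ^ q * ρ ^ (-q)) =
          ((2:ℝ) ^ (q/e) * ((2:ℝ) ^ (2*q+1) * C_P ^ q)) * ρ ^ (-q) := by
        rw [h1]; ring
      rw [h2, Real.mul_rpow (by positivity) (by positivity),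
        ← Real.rpow_mul hρ.le]
      rw [show -q * -(1/e) = q/e by field_simp,
        show q / e = s by rw [hqe]; exact mul_div_cancel_right₀ s he.ne']
      ring
    rw [hconst] at hiter
    apply ENNReal.ofReal_le_of_le_toReal
    rw [← hR0]
    exact hiter
  -- Final assembly: two cases at scale r.
  refine ⟨c3 * (lam/12) ^ s, by positivity, ?_⟩
  intro x r hr hdiam
  have hκr : c3 * (lam/12) ^ s * r ^ s = c3 * (lam*r/12) ^ s := by
    rw [show lam*r/12 = (lam/12)*r by ring,
      Real.mul_rpow (by positivity) hr.le]
    ring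
  set t : ℝ := lam * r / 6 with ht_def
  have hts : 0 < t := by positivity
  have htr : t < r := by
    rw [ht_def]; nlinarith
  have h2ρ : 2 * (lam*r/12) = t := by rw [ht_def]; ring
  have hfinr : μ (ball x t) ≠ ⊤ := (hμ x t hts).2.ne
  rcases le_or_gt (2 * μ (ball x t)) (μ (ball x r)) with hcase | hcase
  · -- spread case: cutoffs centered at x itself
    have hFx : μ (ball x t) ≤ 2 * μ (univ \ ball x t) := by
      have hsub : ball x t ⊆ ball x r := ball_subset_ball htr.le
      have hdiff : μ (ball x r) - μ (ball x t) ≤ μ (univ \ ball x t) := by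
        rw [← measure_diff hsub measurableSet_ball.nullMeasurableSet hfinr]
        exact measure_mono (diff_subset_diff_left (subset_univ _))
      have h1 : μ (ball x t) ≤ μ (ball x r) - μ (ball x t) := by
        apply ENNReal.le_sub_of_add_le_left hfinr
        rw [← two_mul]; exact hcase
      calc μ (ball x t) ≤ μ (univ \ ball x t) := h1.trans hdiff
        _ ≤ 2 * μ (univ \ ball x t) := le_mul_of_one_le_left (zero_le) one_le_two
    have hE := hengine x (lam*r/12) (by positivity) (by rw [h2ρ]; exact hFx)
    rw [h2ρ] at hE
    calc ENNReal.ofReal (c3 * (lam/12) ^ s * r ^ s)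
        = ENNReal.ofReal (c3 * (lam*r/12) ^ s) := by rw [hκr]
      _ ≤ μ (ball x t) := hE
      _ ≤ μ (ball x r) := measure_mono (ball_subset_ball htr.le)
  · -- concentrated case: cutoffs centered at a uniformly perfect point y
    have hballne : ball x (r/3) ≠ univ := by
      intro hcontr
      have hd : EMetric.diam (univ : Set X) ≤ ENNReal.ofReal (2*r/3) := by
        apply EMetric.diam_le
        intro a _ b _
        have ha : a ∈ ball x (r/3) := by rw [hcontr]; trivial
        have hb : b ∈ ball x (r/3) := by rw [hcontr]; trivial
        rw [edist_dist]
        apply ENNReal.ofReal_le_ofReal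
        have h1 : dist a x < r/3 := mem_ball.1 ha
        have h2 : dist b x < r/3 := mem_ball.1 hb
        calc dist a b ≤ dist a x + dist x b := dist_triangle a x b
          _ = dist a x + dist b x := by rw [dist_comm x b]
          _ ≤ 2*r/3 := by linarith
      have hle := le_trans hdiam hd
      rw [ENNReal.ofReal_le_ofReal_iff (by positivity)] at hle
      linarith
    obtain ⟨y, hy⟩ := hup x (r/3) (by positivity) hballne
    have hyx' : dist y x < r/3 := mem_ball.1 hy.1
    have hyx : lam * (r/3) ≤ dist y x := by
      by_contra hcon
      push_neg at hcon
      exact hy.2 (mem_ball.2 hcon)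
    have hsub1 : ball y t ⊆ ball x r := by
      intro z hz
      have h1 : dist z y < t := mem_ball.1 hz
      apply mem_ball.2
      calc dist z x ≤ dist z y + dist y x := dist_triangle z y x
        _ < t + r/3 := by linarith
        _ ≤ r := by rw [ht_def]; nlinarith
    have hsub2 : ball x t ⊆ univ \ ball y t := by
      intro z hz
      have h1 : dist z x < t := mem_ball.1 hz
      refine ⟨trivial, ?_⟩
      intro hzy
      have h2 : dist z y < t := mem_ball.1 hzy
      have h3 : dist y x ≤ dist y z + dist z x := dist_triangle y z x
      rw [dist_comm y z] at h3
      rw [ht_def] at h1 h2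
      nlinarith
    have hFy : μ (ball y t) ≤ 2 * μ (univ \ ball y t) := by
      calc μ (ball y t) ≤ μ (ball x r) := measure_mono hsub1
        _ ≤ 2 * μ (ball x t) := hcase.le
        _ ≤ 2 * μ (univ \ ball y t) := mul_le_mul_right (measure_mono hsub2) 2
    have hE := hengine y (lam*r/12) (by positivity) (by rw [h2ρ]; exact hFy)
    rw [h2ρ] at hE
    calc ENNReal.ofReal (c3 * (lam/12) ^ s * r ^ s)
        = ENNReal.ofReal (c3 * (lam*r/12) ^ s) := by rw [hκr]
      _ ≤ μ (ball y t) := hE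
      _ ≤ μ (ball x r) := measure_mono hsub1
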